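/- Let w be the facility location profile output by the (1, (3 − √5)/2)-Quantile mechanism on an instance. Then for every facility location profile o of that instance, AoM(w) ≤ (2 + √5) · AoM(o). In particular, the distortion of the (1, (3 − √5)/2)-Quantile mechanism under the Average-of-Max cost is at most 2 + √5. -/

import Mathlib

noncomputable section

/-- Max-variant individual cost of an agent at `x` under facility profile `w`. -/
def fcost (x : ℝ) (w : ℝ × ℝ) : ℝ := max |x - w.1| |x - w.2|

/-- `w` is a facility location profile for the candidate multiset `A`:
its first slot is an element of `A` and its second slot is an element of `A`
with one copy of the first slot removed. -/
def IsProfile (A : Multiset ℝ) (w : ℝ × ℝ) : Prop :=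
  w.1 ∈ A ∧ w.2 ∈ A.erase w.1

/-- Canonical closest element of the multiset `A` to `p` (ties broken to the smaller). -/
def closest (A : Multiset ℝ) (p : ℝ) : ℝ :=
  if h : A.toFinset.Nonempty then
    (A.toFinset.filter fun a => ∀ b ∈ A.toFinset, |p - a| ≤ |p - b|).min'
      (by
        obtain ⟨a, ha, hmin⟩ := A.toFinset.exists_min_image (fun a => |p - a|) h
        exact ⟨a, Finset.mem_filter.mpr ⟨ha, hmin⟩⟩)
  else 0

/-- The `⌈γ · |S|⌉`-th leftmost element of the multiset `S` (the leftmost when `γ = 0`). -/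
def qSel (S : Multiset ℝ) (γ : ℝ) : ℝ :=
  (S.sort (· ≤ ·)).getD (⌈γ * (Multiset.card S : ℝ)⌉.toNat - 1) 0

/-- Multiset of locations of the agents of group `d`. -/
def groupLocs {n k : ℕ} (group : Fin n → Fin k) (x : Fin n → ℝ) (d : Fin k) : Multiset ℝ :=
  ((Finset.univ.filter fun i => group i = d).val).map x

/-- The (α,β)-Quantile mechanism: for each group `d` the representatives are the two
candidate locations closest to the ⌈α·n_d⌉-th leftmost agent of the group, and the two
facilities are chosen among the representatives by the ⌈β·k⌉-th leftmost rule. -/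
def quantileMech (A : Multiset ℝ) (α β : ℝ) {n k : ℕ}
    (group : Fin n → Fin k) (x : Fin n → ℝ) : ℝ × ℝ :=
  let y1 : Fin k → ℝ := fun d => closest A (qSel (groupLocs group x d) α)
  let y2 : Fin k → ℝ := fun d => closest (A.erase (y1 d)) (qSel (groupLocs group x d) α)
  let w1 : ℝ := qSel (Finset.univ.val.map y1) β
  let w2 : ℝ := qSel (Finset.univ.val.map fun d => if y1 d = w1 then y2 d else y1 d) β
  (w1, w2)

/-- Average-of-Max cost. -/
def AoM {n k : ℕ} (group : Fin n → Fin k) (x : Fin n → ℝ) (w : ℝ × ℝ) : ℝ :=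
  (1 / (k : ℝ)) * ∑ d : Fin k, ⨆ i : {i : Fin n // group i = d}, fcost (x i.1) w

open Finset

/-!
Let `m` and `h` be the midpoint and the half-distance of the two facilities of `o`; an agent at
`t` then has cost exactly `|t - m| + h` under `o`. With `α = 1` the point `p_d` of group `d` is
its rightmost agent, so the group costs at least `|p_d - m| + h` under `o`; and as one slot of
`o` is always left to choose from, both representatives of the group lie within `|p_d - m| + h`
of `p_d`.

If the facility of the mechanism farther from `m` lies at distance `T > h`, each group pays at
most `T - h` more than under `o`, and this excess is charged to `ρ` times the cost of `o`. If
that facility lies right of `m`, the `(1 - β)`-fraction of groups whose representative lies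
beyond it pays at least `(T + h) / 2` under `o`, which covers the excess when
`2 ≤ ρ (1 - β)`. If it lies left of `m`, the `β`-fraction of groups whose representative lies
beyond it also pays `(T + h) / 2` under `o` but, all its agents lying left of
`m - (T - h) / 2`, pays nothing extra for that facility; the excess of the other groups is
covered when `2 (1 - β) ≤ ρ β`, and what the left groups pay extra for the other facility, when
it lies more than `h` right of `m`, is covered by the `(1 - β)`-fraction of groups beyond it.
Both conditions are equalities for `β = (3 - √5) / 2` and `ρ = 1 + √5`.
-/

theorem abs_sub_closest_le {B : Multiset ℝ} {b : ℝ} (p : ℝ) (hb : b ∈ B) :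
    |p - closest B p| ≤ |p - b| := by
  have hB : B.toFinset.Nonempty := ⟨b, Multiset.mem_toFinset.2 hb⟩
  rw [closest, dif_pos hB]
  exact (mem_filter.1 (min'_mem
    (B.toFinset.filter fun a => ∀ b ∈ B.toFinset, |p - a| ≤ |p - b|) _)).2 b
    (Multiset.mem_toFinset.2 hb)

theorem fcost_eq (t : ℝ) (w : ℝ × ℝ) :
    fcost t w = |t - (w.1 + w.2) / 2| + |w.1 - w.2| / 2 := by
  unfold fcost
  rw [max_def]
  cases abs_cases (t - w.1) <;> cases abs_cases (t - w.2) <;>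
    cases abs_cases (t - (w.1 + w.2) / 2) <;> cases abs_cases (w.1 - w.2) <;>
    split_ifs <;> linarith

theorem fcost_le_abs_sub_add (t m : ℝ) (w : ℝ × ℝ) :
    fcost t w ≤ |t - m| + max |w.1 - m| |w.2 - m| := by
  rw [← max_add_add_left]
  exact max_le_max ((abs_sub_le t m w.1).trans_eq (by rw [abs_sub_comm m]))
    ((abs_sub_le t m w.2).trans_eq (by rw [abs_sub_comm m]))

theorem abs_sub_le_max_of_le {t q u m c : ℝ} (ht : t ≤ q) (hu : u ≤ m + c) :
    |t - u| ≤ max (q - m + |u - m|) (|t - m| + c) := by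
  cases abs_cases (t - u) <;> cases abs_cases (t - m) <;> cases abs_cases (u - m) <;>
    simp only [le_max_iff] <;> first | (left; linarith) | (right; linarith)

theorem fcost_le_max_of_le {t q m c : ℝ} {w : ℝ × ℝ} (ht : t ≤ q) (h₁ : w.1 ≤ m + c)
    (h₂ : w.2 ≤ m + c) :
    fcost t w ≤ max (q - m + max |w.1 - m| |w.2 - m|) (|t - m| + c) :=
  max_le ((abs_sub_le_max_of_le ht h₁).trans (by gcongr; exact le_max_left _ _))
    ((abs_sub_le_max_of_le ht h₂).trans (by gcongr; exact le_max_right _ _))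

theorem IsProfile.fst_mem_or_snd_mem_erase {A : Multiset ℝ} {o : ℝ × ℝ} (ho : IsProfile A o)
    (y : ℝ) : o.1 ∈ A.erase y ∨ o.2 ∈ A.erase y := by
  by_cases hy : o.1 = y
  · exact .inr (hy ▸ ho.2)
  · exact .inl ((Multiset.mem_erase_of_ne hy).2 ho.1)

theorem abs_sub_closest_le_fcost {B : Multiset ℝ} {o : ℝ × ℝ} (hB : o.1 ∈ B ∨ o.2 ∈ B) (p : ℝ) :
    |p - closest B p| ≤ fcost p o := by
  rcases hB with hB | hB
  · exact (abs_sub_closest_le p hB).trans (le_max_left _ _)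
  · exact (abs_sub_closest_le p hB).trans (le_max_right _ _)

namespace List.SortedLE

variable {α : Type*} [LinearOrder α] {l : List α}

theorem succ_le_length_filter_le (hl : l.SortedLE) {i : ℕ} (hi : i < l.length) :
    i + 1 ≤ (l.filter (· ≤ l[i])).length := by
  have hsub := (l.take_sublist (i + 1)).filter (fun a => decide (a ≤ l[i]))
  rw [List.filter_eq_self.2] at hsub
  · simpa [hi] using hsub.length_le
  · intro a ha
    obtain ⟨j, hj, rfl⟩ := List.mem_iff_getElem.1 ha
    simp only [List.getElem_take, decide_eq_true_eq]
    rw [List.length_take] at hj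
    exact hl.getElem_le_getElem_of_le (by omega)

theorem length_sub_le_length_filter_ge (hl : l.SortedLE) {i : ℕ} (hi : i < l.length) :
    l.length - i ≤ (l.filter (l[i] ≤ ·)).length := by
  have hsub := (l.drop_sublist i).filter (fun a => decide (l[i] ≤ a))
  rw [List.filter_eq_self.2] at hsub
  · simpa using hsub.length_le
  · intro a ha
    obtain ⟨j, hj, rfl⟩ := List.mem_iff_getElem.1 ha
    simp only [List.getElem_drop, decide_eq_true_eq]
    exact hl.getElem_le_getElem_of_le (by omega)

end List.SortedLE

section QuantileSelection

variable {S : Multiset ℝ} {γ : ℝ}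

theorem card_filter_eq_length_filter_sort (P : ℝ → Prop) [DecidablePred P] :
    Multiset.card (S.filter P) = ((S.sort (· ≤ ·)).filter (P ·)).length := by
  conv_lhs => rw [← Multiset.sort_eq S (· ≤ ·)]
  rw [Multiset.filter_coe, Multiset.coe_card]

theorem qSel_eq_getElem_sort (hS : S ≠ 0) (hγ : γ ≤ 1) :
    ∃ h : ⌈γ * Multiset.card S⌉₊ - 1 < (S.sort (· ≤ ·)).length,
      qSel S γ = (S.sort (· ≤ ·))[⌈γ * Multiset.card S⌉₊ - 1] := by
  have hlt : ⌈γ * Multiset.card S⌉₊ - 1 < (S.sort (· ≤ ·)).length := by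
    have hpos := Multiset.card_pos.2 hS
    have : ⌈γ * Multiset.card S⌉₊ ≤ Multiset.card S :=
      Nat.ceil_le.2 (mul_le_of_le_one_left (Nat.cast_nonneg _) hγ)
    rw [Multiset.length_sort]
    omega
  refine ⟨hlt, ?_⟩
  rw [qSel, Int.ceil_toNat]
  exact List.getD_eq_getElem _ _ hlt

theorem qSel_mem (hS : S ≠ 0) (hγ : γ ≤ 1) : qSel S γ ∈ S := by
  obtain ⟨hlt, heq⟩ := qSel_eq_getElem_sort hS hγ
  rw [heq, ← Multiset.mem_sort (· ≤ ·)]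
  exact List.getElem_mem hlt

theorem mul_card_le_card_filter_le_qSel (hγ₀ : 0 < γ) (hγ₁ : γ ≤ 1) :
    γ * Multiset.card S ≤ Multiset.card (S.filter (· ≤ qSel S γ)) := by
  rcases eq_or_ne S 0 with rfl | hS
  · simp
  obtain ⟨hlt, heq⟩ := qSel_eq_getElem_sort hS hγ₁
  have hcount := ((Multiset.pairwise_sort _ _).sortedLE).succ_le_length_filter_le hlt
  rw [← heq, ← card_filter_eq_length_filter_sort] at hcount
  have hpos : 0 < ⌈γ * Multiset.card S⌉₊ :=
    Nat.ceil_pos.2 (mul_pos hγ₀ (Nat.cast_pos.2 (Multiset.card_pos.2 hS)))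
  calc γ * Multiset.card S ≤ ⌈γ * Multiset.card S⌉₊ := Nat.le_ceil _
    _ = ((⌈γ * Multiset.card S⌉₊ - 1 + 1 : ℕ) : ℝ) := by rw [Nat.sub_add_cancel hpos]
    _ ≤ _ := by exact_mod_cast hcount

theorem card_sub_mul_card_le_card_filter_qSel_le (hγ₀ : 0 < γ) (hγ₁ : γ ≤ 1) :
    Multiset.card S - γ * Multiset.card S ≤ Multiset.card (S.filter (qSel S γ ≤ ·)) := by
  rcases eq_or_ne S 0 with rfl | hS
  · simp
  obtain ⟨hlt, heq⟩ := qSel_eq_getElem_sort hS hγ₁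
  have hcount := ((Multiset.pairwise_sort _ _).sortedLE).length_sub_le_length_filter_ge hlt
  rw [← heq, ← card_filter_eq_length_filter_sort, Multiset.length_sort] at hcount
  rw [Multiset.length_sort] at hlt
  have hpos : 1 ≤ ⌈γ * Multiset.card S⌉₊ :=
    Nat.ceil_pos.2 (mul_pos hγ₀ (Nat.cast_pos.2 (Multiset.card_pos.2 hS)))
  have hceil : (⌈γ * Multiset.card S⌉₊ : ℝ) < γ * Multiset.card S + 1 :=
    Nat.ceil_lt_add_one (mul_nonneg hγ₀.le (Nat.cast_nonneg _))
  calc (Multiset.card S : ℝ) - γ * Multiset.card S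
      ≤ ((Multiset.card S - (⌈γ * Multiset.card S⌉₊ - 1) : ℕ) : ℝ) := by
        rw [Nat.cast_sub hlt.le, Nat.cast_sub hpos]
        push_cast
        linarith
    _ ≤ _ := by exact_mod_cast hcount

theorem le_qSel_one {a : ℝ} (ha : a ∈ S) : a ≤ qSel S 1 := by
  have hall := mul_card_le_card_filter_le_qSel (S := S) one_pos le_rfl
  rw [one_mul, Nat.cast_le] at hall
  rw [← Multiset.eq_of_le_of_card_le (Multiset.filter_le _ S) hall] at ha
  exact (Multiset.mem_filter.1 ha).2

end QuantileSelection

theorem mul_card_le_card_le_qSel_map {ι : Type*} [Fintype ι] (y : ι → ℝ) {γ : ℝ} (hγ₀ : 0 < γ)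
    (hγ₁ : γ ≤ 1) : γ * Fintype.card ι ≤ #{d | y d ≤ qSel (univ.val.map y) γ} := by
  have := mul_card_le_card_filter_le_qSel (S := univ.val.map y) hγ₀ hγ₁
  rwa [Multiset.filter_map, Multiset.card_map, Multiset.card_map, card_val, card_univ] at this

theorem one_sub_mul_card_le_card_qSel_le_map {ι : Type*} [Fintype ι] (y : ι → ℝ) {γ : ℝ}
    (hγ₀ : 0 < γ) (hγ₁ : γ ≤ 1) :
    (1 - γ) * Fintype.card ι ≤ #{d | qSel (univ.val.map y) γ ≤ y d} := by
  have := card_sub_mul_card_le_card_filter_qSel_le (S := univ.val.map y) hγ₀ hγ₁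
  rwa [Multiset.filter_map, Multiset.card_map, Multiset.card_map, card_val, card_univ,
    ← one_sub_mul] at this

def groupCost {α κ : Type*} (group : α → κ) (x : α → ℝ) (w : ℝ × ℝ) (d : κ) : ℝ :=
  ⨆ i : {i // group i = d}, fcost (x i) w

theorem AoM_eq_sum_groupCost {n k : ℕ} (group : Fin n → Fin k) (x : Fin n → ℝ) (w : ℝ × ℝ) :
    AoM group x w = (1 / (k : ℝ)) * ∑ d, groupCost group x w d :=
  rfl

section GroupCost

variable {α κ : Type*} {group : α → κ} {x : α → ℝ} {w : ℝ × ℝ} {d : κ}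

theorem fcost_le_groupCost [Finite α] {i : α} (hi : group i = d) :
    fcost (x i) w ≤ groupCost group x w d :=
  le_ciSup (f := fun j : {i // group i = d} => fcost (x j) w) (Set.finite_range _).bddAbove ⟨i, hi⟩

theorem groupCost_le {B : ℝ} (hd : ∃ i, group i = d) (hB : ∀ i, group i = d → fcost (x i) w ≤ B) :
    groupCost group x w d ≤ B := by
  obtain ⟨i, hi⟩ := hd
  have : Nonempty {i // group i = d} := ⟨⟨i, hi⟩⟩
  exact ciSup_le fun i => hB i i.2

end GroupCost

theorem mem_groupLocs {n k : ℕ} {group : Fin n → Fin k} (x : Fin n → ℝ) {i : Fin n} {d : Fin k}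
    (hi : group i = d) : x i ∈ groupLocs group x d :=
  Multiset.mem_map_of_mem _ (by simp [hi])

theorem exists_eq_qSel_groupLocs {n k : ℕ} {group : Fin n → Fin k} (x : Fin n → ℝ) {d : Fin k}
    {γ : ℝ} (hd : ∃ i, group i = d) (hγ : γ ≤ 1) :
    ∃ i, group i = d ∧ x i = qSel (groupLocs group x d) γ := by
  obtain ⟨i, hi⟩ := hd
  have hS : groupLocs group x d ≠ 0 :=
    Multiset.card_pos.1 (Multiset.card_pos_iff_exists_mem.2 ⟨_, mem_groupLocs x hi⟩)
  obtain ⟨j, hj, hxj⟩ := Multiset.mem_map.1 (qSel_mem hS hγ)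
  exact ⟨j, by simpa using hj, hxj⟩

theorem mul_le_sum_of_le_card {α : Type*} {s : Finset α} {f : α → ℝ} {a b : ℝ}
    (hb : b ≤ #s) (ha : 0 ≤ a) (hf : ∀ i ∈ s, a ≤ f i) : b * a ≤ ∑ i ∈ s, f i :=
  (mul_le_mul_of_nonneg_right hb ha).trans (by simpa using s.card_nsmul_le_sum f a hf)

theorem add_half_le_of_abs_sub_le {p r m h t : ℝ} (hpr : |p - r| ≤ |p - m| + h)
    (hr : m + t ≤ r) (ht : h < t) : m + (t - h) / 2 ≤ p := by
  cases abs_cases (p - r) <;> cases abs_cases (p - m) <;> linarith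

theorem le_sub_half_of_abs_sub_le {p r m h t : ℝ} (hpr : |p - r| ≤ |p - m| + h)
    (hr : r ≤ m - t) (ht : h < t) : p ≤ m - (t - h) / 2 := by
  cases abs_cases (p - r) <;> cases abs_cases (p - m) <;> linarith

section Counting

variable {ι : Type*} [Fintype ι] {O M p r s : ι → ℝ} {β ρ m h t : ℝ}

theorem sum_le_sum_add_of_le_add {s : Finset ι} (a b : ℝ) (hs : ∀ d ∈ s, M d ≤ O d + a)
    (hsc : ∀ d ∉ s, M d ≤ O d + b) :
    ∑ d, M d ≤ ∑ d, O d + #s * a + (Fintype.card ι - #s) * b := by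
  classical
  have hin := sum_le_sum hs
  have hout := sum_le_sum fun d hd => hsc d (mem_compl.1 hd)
  rw [sum_add_distrib, sum_const, nsmul_eq_mul] at hin hout
  rw [card_compl, Nat.cast_sub (card_le_univ s)] at hout
  rw [← sum_add_sum_compl s M, ← sum_add_sum_compl s O]
  linarith

theorem card_mul_sub_le_mul_sum {S : Finset ι} (hρ : 2 ≤ ρ * (1 - β)) (hρ₀ : 0 ≤ ρ)
    (hh : 0 ≤ h) (ht : h ≤ t) (hS : (1 - β) * Fintype.card ι ≤ #S)
    (hOS : ∀ d ∈ S, (t + h) / 2 ≤ O d) :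
    Fintype.card ι * (t - h) ≤ ρ * ∑ d ∈ S, O d := by
  have hsum := mul_le_sum_of_le_card hS (by linarith) hOS
  have hK : (0 : ℝ) ≤ Fintype.card ι := Nat.cast_nonneg _
  have hKt : 0 ≤ Fintype.card ι * ((t + h) / 2) := mul_nonneg hK (by linarith)
  nlinarith [mul_le_mul_of_nonneg_right hρ hKt, mul_le_mul_of_nonneg_left hsum hρ₀]

theorem card_sub_card_mul_sub_le_mul_sum {S : Finset ι} (hρ : 2 * (1 - β) ≤ ρ * β)
    (hρ₀ : 0 ≤ ρ) (hh : 0 ≤ h) (ht : h ≤ t) (hS : β * Fintype.card ι ≤ #S)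
    (hOS : ∀ d ∈ S, (t + h) / 2 ≤ O d) :
    (Fintype.card ι - #S) * (t - h) ≤ ρ * ∑ d ∈ S, O d := by
  have hsum := mul_le_sum_of_le_card le_rfl (by linarith) hOS
  have hK : (0 : ℝ) ≤ Fintype.card ι := Nat.cast_nonneg _
  have hcompl : 2 * (Fintype.card ι - #S) ≤ ρ * #S := by
    nlinarith [mul_le_mul_of_nonneg_right hρ hK, mul_le_mul_of_nonneg_left hS hρ₀]
  have hρS : 0 ≤ ρ * #S * h := by positivity
  nlinarith [mul_le_mul_of_nonneg_right hcompl (by linarith : (0 : ℝ) ≤ t - h),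
    mul_le_mul_of_nonneg_left hsum hρ₀]

theorem sum_le_of_far_right (hρ : 2 ≤ ρ * (1 - β)) (hρ₀ : 0 ≤ ρ) (hh : 0 ≤ h) (ht : h < t)
    (hO : ∀ d, |p d - m| + h ≤ O d) (hr : ∀ d, |p d - r d| ≤ |p d - m| + h)
    (hM : ∀ d, M d ≤ O d + (t - h))
    (hcount : (1 - β) * Fintype.card ι ≤ #{d | m + t ≤ r d}) :
    ∑ d, M d ≤ (1 + ρ) * ∑ d, O d := by
  have hsum : ∑ d, M d ≤ ∑ d, O d + Fintype.card ι * (t - h) := by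
    have := sum_le_sum (s := univ) fun d _ => hM d
    rwa [sum_add_distrib, sum_const, card_univ, nsmul_eq_mul] at this
  have hfar := card_mul_sub_le_mul_sum (O := O) hρ hρ₀ hh ht.le hcount fun d hd => by
    linarith [add_half_le_of_abs_sub_le (hr d) (mem_filter.1 hd).2 ht, le_abs_self (p d - m), hO d]
  have hsub : ∑ d with m + t ≤ r d, O d ≤ ∑ d, O d :=
    sum_le_sum_of_subset_of_nonneg (subset_univ _) fun d _ _ => by
      linarith [abs_nonneg (p d - m), hO d]
  nlinarith [mul_le_mul_of_nonneg_left hsub hρ₀]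

theorem sum_le_of_far_left {v : ℝ} (hρ₁ : 2 ≤ ρ * (1 - β)) (hρ₂ : 2 * (1 - β) ≤ ρ * β)
    (hρ₀ : 0 ≤ ρ) (hh : 0 ≤ h) (ht : h < t)
    (hO : ∀ d, |p d - m| + h ≤ O d) (hr : ∀ d, |p d - r d| ≤ |p d - m| + h)
    (hs : ∀ d, |p d - s d| ≤ |p d - m| + h) (hM₁ : ∀ d, M d ≤ O d + (t - h))
    (hM₂ : ∀ c, 0 ≤ c → v ≤ m + c → ∀ d, M d ≤ max (p d - m + t) (O d - h + c))
    (hr_count : β * Fintype.card ι ≤ #{d | r d ≤ m - t})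
    (hs_count : (1 - β) * Fintype.card ι ≤ #{d | v ≤ s d}) :
    ∑ d, M d ≤ (1 + ρ) * ∑ d, O d := by
  classical
  set L : Finset ι := {d | r d ≤ m - t}
  have hO₀ : ∀ d, 0 ≤ O d := fun d => by linarith [abs_nonneg (p d - m), hO d]
  have hpL : ∀ d ∈ L, p d ≤ m - (t - h) / 2 := fun d hd =>
    le_sub_half_of_abs_sub_le (hr d) (mem_filter.1 hd).2 ht
  have hOL : ∀ d ∈ L, (t + h) / 2 ≤ O d := fun d hd => by
    linarith [hpL d hd, neg_abs_le (p d - m), hO d]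
  have hsplit : ∀ c, h ≤ c → v ≤ m + c →
      ∑ d, M d ≤ ∑ d, O d + #L * (c - h) + (Fintype.card ι - #L) * (t - h) :=
    fun c hc hv => sum_le_sum_add_of_le_add _ _
      (fun d hd => (hM₂ c (by linarith) hv d).trans
        (max_le (by linarith [hpL d hd, hOL d hd]) (by linarith)))
      (fun d _ => hM₁ d)
  have hL := card_sub_card_mul_sub_le_mul_sum hρ₂ hρ₀ hh ht.le hr_count hOL
  have hLO : ∑ d ∈ L, O d ≤ ∑ d, O d :=
    sum_le_sum_of_subset_of_nonneg (subset_univ _) fun d _ _ => hO₀ d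
  by_cases hv : v ≤ m + h
  · have := hsplit h le_rfl hv
    nlinarith [mul_le_mul_of_nonneg_left hLO hρ₀]
  rw [not_le] at hv
  set S : Finset ι := {d | v ≤ s d}
  have hpS : ∀ d ∈ S, m + (v - m - h) / 2 ≤ p d := fun d hd =>
    add_half_le_of_abs_sub_le (hs d) (by linarith [(mem_filter.1 hd).2]) (by linarith)
  have hS := card_mul_sub_le_mul_sum (O := O) (t := v - m) hρ₁ hρ₀ hh (by linarith) hs_count
    fun d hd => by linarith [hpS d hd, le_abs_self (p d - m), hO d]
  have hdisj : Disjoint L S :=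
    disjoint_left.2 fun d hdL hdS => by linarith [hpL d hdL, hpS d hdS]
  have hLS : ∑ d ∈ L, O d + ∑ d ∈ S, O d ≤ ∑ d, O d := by
    rw [← sum_union hdisj]
    exact sum_le_sum_of_subset_of_nonneg (subset_univ _) fun d _ _ => hO₀ d
  have hcard : (#L : ℝ) * (v - m - h) ≤ Fintype.card ι * (v - m - h) :=
    mul_le_mul_of_nonneg_right (by exact_mod_cast card_le_univ L) (by linarith)
  have := hsplit (v - m) (by linarith) (by linarith)
  nlinarith [mul_le_mul_of_nonneg_left hLS hρ₀]

/-- `O d` and `M d` stand for the costs of group `d` under `o` and under `(w₁, w₂)`, `p d` for its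
rightmost agent, `r₁ d` and `r₂ d` for the representatives from which `w₁` and `w₂` are
selected, and `m`, `h` for the midpoint and the half-distance of the facilities of `o`. -/
theorem sum_le_of_quantile_counts {w₁ w₂ : ℝ} {r₁ r₂ : ι → ℝ} (hβ : β ≤ 1)
    (hρ₁ : 2 ≤ ρ * (1 - β)) (hρ₂ : 2 * (1 - β) ≤ ρ * β) (hh : 0 ≤ h)
    (hO : ∀ d, |p d - m| + h ≤ O d) (hr₁ : ∀ d, |p d - r₁ d| ≤ |p d - m| + h)
    (hr₂ : ∀ d, |p d - r₂ d| ≤ |p d - m| + h)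
    (hM₁ : ∀ d, M d ≤ O d + (max |w₁ - m| |w₂ - m| - h))
    (hM₂ : ∀ c, w₁ ≤ m + c → w₂ ≤ m + c →
      ∀ d, M d ≤ max (p d - m + max |w₁ - m| |w₂ - m|) (O d - h + c))
    (hr₁_le : β * Fintype.card ι ≤ #{d | r₁ d ≤ w₁})
    (hr₁_ge : (1 - β) * Fintype.card ι ≤ #{d | w₁ ≤ r₁ d})
    (hr₂_le : β * Fintype.card ι ≤ #{d | r₂ d ≤ w₂})
    (hr₂_ge : (1 - β) * Fintype.card ι ≤ #{d | w₂ ≤ r₂ d}) :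
    ∑ d, M d ≤ (1 + ρ) * ∑ d, O d := by
  wlog h₁₂ : |w₂ - m| ≤ |w₁ - m| generalizing w₁ w₂ r₁ r₂
  · refine this hr₂ hr₁ (fun d => max_comm |w₁ - m| |w₂ - m| ▸ hM₁ d)
      (fun c h₂ h₁ => max_comm |w₁ - m| |w₂ - m| ▸ hM₂ c h₁ h₂) hr₂_le hr₂_ge hr₁_le hr₁_ge
      (le_of_not_ge h₁₂)
  rw [max_eq_left h₁₂] at hM₁ hM₂
  have hρ₀ : 0 ≤ ρ := by linarith
  have hO₀ : ∀ d, 0 ≤ O d := fun d => by linarith [abs_nonneg (p d - m), hO d]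
  by_cases hnear : |w₁ - m| ≤ h
  · have : ∑ d, M d ≤ ∑ d, O d := sum_le_sum fun d _ => by linarith [hM₁ d]
    nlinarith [sum_nonneg fun d (_ : d ∈ univ) => hO₀ d]
  rw [not_le] at hnear
  rcases abs_choice (w₁ - m) with hw | hw
  · exact sum_le_of_far_right hρ₁ hρ₀ hh hnear hO hr₁ hM₁ (by rwa [hw, add_sub_cancel])
  · exact sum_le_of_far_left hρ₁ hρ₂ hρ₀ hh hnear hO hr₁ hr₂ hM₁
      (fun c hc hv => hM₂ c (by linarith [abs_nonneg (w₁ - m)]) hv)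
      (by rwa [show m - |w₁ - m| = w₁ by linarith]) hr₂_ge

end Counting

theorem AoM_quantileMech_one_le {A : Multiset ℝ} {β ρ : ℝ} (hβ₀ : 0 < β) (hβ₁ : β ≤ 1)
    (hρ₁ : 2 ≤ ρ * (1 - β)) (hρ₂ : 2 * (1 - β) ≤ ρ * β) {n k : ℕ} {group : Fin n → Fin k}
    (hgrp : ∀ d, ∃ i, group i = d) (x : Fin n → ℝ) {o : ℝ × ℝ} (ho : IsProfile A o) :
    AoM group x (quantileMech A 1 β group x) ≤ (1 + ρ) * AoM group x o := by
  set m := (o.1 + o.2) / 2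
  set h := |o.1 - o.2| / 2
  set p : Fin k → ℝ := fun d => qSel (groupLocs group x d) 1
  set y₁ : Fin k → ℝ := fun d => closest A (p d)
  set w₁ := qSel (univ.val.map y₁) β
  set y₂ : Fin k → ℝ := fun d => if y₁ d = w₁ then closest (A.erase (y₁ d)) (p d) else y₁ d
  set w₂ := qSel (univ.val.map y₂) β
  have hw : quantileMech A 1 β group x = (w₁, w₂) := rfl
  have hO : ∀ i, |x i - m| + h ≤ groupCost group x o (group i) := fun i =>
    fcost_eq (x i) o ▸ fcost_le_groupCost rfl
  have hp : ∀ d, |p d - m| + h ≤ groupCost group x o d := fun d => by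
    obtain ⟨i, rfl, hi⟩ := exists_eq_qSel_groupLocs x (hgrp d) le_rfl
    simpa only [p, ← hi] using hO i
  have hy₁ : ∀ d, |p d - y₁ d| ≤ |p d - m| + h := fun d =>
    fcost_eq (p d) o ▸ abs_sub_closest_le_fcost (.inl ho.1) _
  have hy₂ : ∀ d, |p d - y₂ d| ≤ |p d - m| + h := fun d => by
    simp only [y₂]
    split_ifs
    · exact fcost_eq (p d) o ▸ abs_sub_closest_le_fcost (ho.fst_mem_or_snd_mem_erase _) _
    · exact hy₁ d
  rw [hw, AoM_eq_sum_groupCost, AoM_eq_sum_groupCost, mul_left_comm]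
  gcongr
  refine sum_le_of_quantile_counts hβ₁ hρ₁ hρ₂ (by positivity) hp hy₁ hy₂
    (fun d => groupCost_le (hgrp d) fun i hi => ?_)
    (fun c hc₁ hc₂ d => groupCost_le (hgrp d) fun i hi => ?_)
    (mul_card_le_card_le_qSel_map y₁ hβ₀ hβ₁) (one_sub_mul_card_le_card_qSel_le_map y₁ hβ₀ hβ₁)
    (mul_card_le_card_le_qSel_map y₂ hβ₀ hβ₁) (one_sub_mul_card_le_card_qSel_le_map y₂ hβ₀ hβ₁)
  · exact (fcost_le_abs_sub_add (x i) m _).trans (by linarith [hi ▸ hO i])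
  · exact (fcost_le_max_of_le (le_qSel_one (mem_groupLocs x hi)) hc₁ hc₂).trans
      (max_le_max le_rfl (by linarith [hi ▸ hO i]))

theorem quantileMech_AoM_distortion_golden_general
    (A : Multiset ℝ)
    (n k : ℕ)
    (group : Fin n → Fin k) (hgrp : ∀ d : Fin k, ∃ i : Fin n, group i = d)
    (x : Fin n → ℝ) (o : ℝ × ℝ) (ho : IsProfile A o) :
    AoM group x (quantileMech A 1 ((3 - Real.sqrt 5) / 2) group x) ≤
      (2 + Real.sqrt 5) * AoM group x o := by
  have h5 : Real.sqrt 5 ^ 2 = 5 := Real.sq_sqrt (by norm_num)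
  have h2 : 2 < Real.sqrt 5 := by nlinarith [Real.sqrt_nonneg 5]
  have h3 : Real.sqrt 5 < 3 := by nlinarith [Real.sqrt_nonneg 5]
  have := AoM_quantileMech_one_le (β := (3 - Real.sqrt 5) / 2) (ρ := 1 + Real.sqrt 5)
    (by linarith) (by linarith) (by nlinarith) (by nlinarith) hgrp x ho
  rwa [show 1 + (1 + Real.sqrt 5) = 2 + Real.sqrt 5 by ring] at this

/-- For the Average-of-Max cost, the distortion of the (1,(3-√5)/2)-Quantile mechanism
is at most 2 + √5. -/
theorem quantileMech_AoM_distortion_golden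
    (A : Multiset ℝ) (hA : 2 ≤ Multiset.card A)
    (n k : ℕ) (hn : 0 < n) (hk : 0 < k)
    (group : Fin n → Fin k) (hgrp : ∀ d : Fin k, ∃ i : Fin n, group i = d)
    (x : Fin n → ℝ) (o : ℝ × ℝ) (ho : IsProfile A o) :
    AoM group x (quantileMech A 1 ((3 - Real.sqrt 5) / 2) group x) ≤
      (2 + Real.sqrt 5) * AoM group x o :=
  quantileMech_AoM_distortion_golden_general A n k group hgrp x o ho
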